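/- arXiv:1804.07367 — 2 statements merged into one kernel-verified Lean document; each statement's English description precedes it below -/
import Mathlib

section
/- If k and k' are Brauer equivalent number fields, then their Galois kernels coincide: the maximal subfield of k that is Galois over ℚ is isomorphic to the maximal subfield of k' that is Galois over ℚ. -/
/- Preliminary definitions: an abstract Brauer-group theory (the Brauer group
functor together with restriction maps and the class map on algebras), Brauer
equivalence of number fields, quaternion algebras, ramification at finite and
infinite places, splitting of rational primes, orders, etc. -/

open NumberField Module IsDedekindDomain
open scoped TensorProduct

noncomputable section

/-- An assignment, to every field, of its Brauer group, together with
restriction maps induced by field embeddings and the map sending a central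
simple algebra to its Brauer class. -/
structure BrauerTheory : Type 1 where
  /-- the Brauer group of a field -/
  Br : ∀ (K : Type) [Field K], CommGrpCat.{0}
  /-- restriction along a field embedding, `[B] ↦ [B ⊗ K]` -/
  res : ∀ {F K : Type} [Field F] [Field K], (F →+* K) → (Br F ⟶ Br K)
  /-- the Brauer class of a central simple algebra -/
  cls : ∀ (K : Type) [Field K] (A : Type) [Ring A] [Algebra K A], Br K

/-- Two number fields `k` and `k'` are *Brauer equivalent* if there is an
isomorphism of their Brauer groups commuting with the restriction maps coming
from all common subfields and with the restriction maps to all common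
overfields. -/
def BrauerEquivalent (T : BrauerTheory) (k k' : Type) [Field k] [Field k'] : Prop :=
  ∃ Φ : T.Br k ≃* T.Br k',
    (∀ (F : Type) [Field F] [NumberField F] [Algebra F k] [Algebra F k'] (x : T.Br F),
        Φ (T.res (algebraMap F k) x) = T.res (algebraMap F k') x) ∧
    (∀ (L : Type) [Field L] [NumberField L] [Algebra k L] [Algebra k' L] (x : T.Br k),
        T.res (algebraMap k' L) (Φ x) = T.res (algebraMap k L) x)

/-- A quaternion algebra over `F` : a 4-dimensional central simple `F`-algebra. -/
def IsQuaternionAlgebra (F A : Type) [Field F] [Ring A] [Algebra F A] : Prop :=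
  Algebra.IsCentral F A ∧ IsSimpleRing A ∧ Module.finrank F A = 4

/-- An `F`-algebra `A` is ramified at a finite place `v` of the number field `F`
if `A ⊗_F F_v` is a division algebra. -/
def RamifiedAtFin (F : Type) [Field F] [NumberField F]
    (A : Type) [Ring A] [Algebra F A]
    (v : HeightOneSpectrum (𝓞 F)) : Prop :=
  ∀ x : (v.adicCompletion F) ⊗[F] A, x ≠ 0 → IsUnit x

/-- An `F`-algebra `A` is ramified at an infinite place `v` of the number field
`F` if `A ⊗_F F_v` is a division algebra. -/
def RamifiedAtInf (F : Type) [Field F] [NumberField F]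
    (A : Type) [Ring A] [Algebra F A]
    (v : InfinitePlace F) : Prop :=
  ∀ x : v.1.Completion ⊗[F] A, x ≠ 0 → IsUnit x

/-- The set of (nonzero) primes of the ring of integers of `K` lying above the
rational prime `p`. -/
def PrimesOver (K : Type) [Field K] (p : ℕ) : Set (Ideal (𝓞 K)) :=
  {P | P.IsPrime ∧ P ≠ ⊥ ∧ (p : 𝓞 K) ∈ P}

/-- The inertia degree `f(P/p)` of a prime `P` of `K` over the rational prime
`p`, computed as the multiplicity of `p` in the cardinality of the residue
field. -/
def inertiaDegOver (K : Type) [Field K] (p : ℕ) (P : Ideal (𝓞 K)) : ℕ :=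
  (Nat.card ((𝓞 K) ⧸ P)).factorization p

/-- The ramification index `e(P/p)` of a prime `P` of `K` over the rational
prime `p`. -/
def ramIdxOver (K : Type) [Field K] (p : ℕ) (P : Ideal (𝓞 K)) : ℕ :=
  Ideal.ramificationIdx' (Ideal.span {(p : ℤ)}) P

/-- A rational prime `p` is unramified in the number field `K`. -/
def UnramifiedIn (K : Type) [Field K] (p : ℕ) : Prop :=
  ∀ P ∈ PrimesOver K p, ramIdxOver K p P = 1

/-- A rational prime `p` splits completely in the number field `K`. -/
def SplitsCompletely (K : Type) [Field K] (p : ℕ) : Prop :=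
  ∀ P ∈ PrimesOver K p, ramIdxOver K p P = 1 ∧ inertiaDegOver K p P = 1

/-- A finite prime `v` of `F` splits completely in the extension `K/F`. -/
def SplitsCompletelyAt (F K : Type) [Field F] [Field K] [Algebra F K]
    (v : Ideal (𝓞 F)) : Prop :=
  ∀ P : Ideal (𝓞 K), P.IsPrime → P ≠ ⊥ → P.comap (algebraMap (𝓞 F) (𝓞 K)) = v →
    Ideal.ramificationIdx' v P = 1 ∧
    Ideal.inertiaDeg' v P = 1

/-- A finite prime `v` of `F` is unramified in the extension `K/F`. -/
def UnramifiedAtRel (F K : Type) [Field F] [Field K] [Algebra F K]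
    (v : Ideal (𝓞 F)) : Prop :=
  ∀ P : Ideal (𝓞 K), P.IsPrime → P ≠ ⊥ → P.comap (algebraMap (𝓞 F) (𝓞 K)) = v →
    Ideal.ramificationIdx' v P = 1

/-- The local degree `[K_P : F_v] = e(P/v) · f(P/v)` of the extension `K/F` at a
prime `P` of `K` lying over the prime `v` of `F`. -/
def localDegreeAt (F K : Type) [Field F] [Field K] [Algebra F K]
    (v : Ideal (𝓞 F)) (P : Ideal (𝓞 K)) : ℕ :=
  Ideal.ramificationIdx' v P *
    Ideal.inertiaDeg' v P

/-- The Galois kernel of a number field `k`: the maximal subfield of `k` which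
is Galois over `ℚ`. -/
def galoisKernel (k : Type) [Field k] [NumberField k] : IntermediateField ℚ k :=
  ⨆ E ∈ {E : IntermediateField ℚ k | IsGalois ℚ E}, E

/-- An `𝓞 K`-order in a `K`-algebra `A` : a subring which is an `𝓞 K`-submodule,
finitely generated as a `ℤ`-module, and containing a `K`-basis of `A`. -/
def IsOrder (K A : Type) [Field K] [Ring A] [Algebra K A] (O : Subring A) : Prop :=
  (∀ (c : 𝓞 K), ∀ x ∈ O, algebraMap K A (algebraMap (𝓞 K) K c) * x ∈ O) ∧
  (∃ s : Finset A, ((Submodule.span ℤ (s : Set A) : Submodule ℤ A) : Set A) = (O : Set A)) ∧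
  Submodule.span K (O : Set A) = ⊤

/-- A maximal order in a `K`-algebra `A`. -/
def IsMaximalOrder (K A : Type) [Field K] [Ring A] [Algebra K A] (O : Subring A) : Prop :=
  IsOrder K A O ∧ ∀ O' : Subring A, IsOrder K A O' → O ≤ O' → O' = O

/-- A totally positive element of a number field. -/
def TotallyPositive (K : Type) [Field K] (a : K) : Prop :=
  ∀ φ : K →+* ℂ, ComplexEmbedding.IsReal φ → 0 < (φ a).re

/-- A number field has narrow class number one : every nonzero ideal of its ring
of integers is generated by a totally positive element. -/
def NarrowClassNumberOne (K : Type) [Field K] : Prop :=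
  ∀ I : Ideal (𝓞 K), I ≠ ⊥ →
    ∃ a : 𝓞 K, I = Ideal.span {a} ∧ TotallyPositive K (algebraMap (𝓞 K) K a)

/-! Let `p` be a prime unramified in `k` and `k'` that has a degree-one prime in `k`. By the gcd
theorem the inertia degrees of the primes of `k'` above `p` have gcd `1`. In the Galois kernel
`k₀'` of `k'` all primes above `p` share one inertia degree, and it divides the inertia degree of
every prime of `k'` above `p`; hence `p` splits completely in `k₀'`. Brauer's theorem then embeds
`k₀'` into `k`, and the image, being Galois, lies in `k₀`. By symmetry `k₀` embeds into `k₀'`, and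
mutual `ℚ`-embeddings of number fields are isomorphisms. -/

section PrimesOver

variable {K : Type} [Field K] [NumberField K] {p : ℕ} {P : Ideal (𝓞 K)}

theorem mem_primesOver_iff (hp : p.Prime) :
    P ∈ PrimesOver K p ↔ P ∈ (Ideal.span {(p : ℤ)}).primesOver (𝓞 K) := by
  constructor
  · rintro ⟨hprime, -, hpP⟩
    exact ⟨hprime, (Ideal.liesOver_span_iff hprime.ne_top (Nat.prime_iff_prime_int.mp hp)).mpr
      (by simpa using hpP)⟩
  · rintro ⟨hprime, hlies⟩
    have hpP := (Ideal.liesOver_span_iff hprime.ne_top (Nat.prime_iff_prime_int.mp hp)).mp hlies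
    refine ⟨hprime, fun hbot => ?_, by simpa using hpP⟩
    simp [hbot, hp.ne_zero] at hpP

theorem ramIdxOver_eq_ramificationIdx (hp : p.Prime) (hP : P ∈ PrimesOver K p) :
    ramIdxOver K p P = P.ramificationIdx ℤ := by
  obtain ⟨_, _⟩ := (mem_primesOver_iff hp).mp hP
  exact Ideal.ramificationIdx'_eq_ramificationIdx _ _ (by simpa using hp.ne_zero)

theorem inertiaDegOver_eq_inertiaDeg (hp : p.Prime) (hP : P ∈ PrimesOver K p) :
    inertiaDegOver K p P = P.inertiaDeg ℤ := by
  obtain ⟨_, _⟩ := (mem_primesOver_iff hp).mp hP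
  have := (Nat.prime_iff_prime_int.mp hp).isMaximal_span_singleton
  have : P.IsMaximal := hP.1.isMaximal hP.2.1
  rw [inertiaDegOver, ← Submodule.cardQuot_apply, ← Ideal.absNorm_apply,
    Ideal.absNorm_eq_pow_inertiaDeg' P hp, Nat.factorization_pow_self hp,
    Ideal.inertiaDeg'_eq_inertiaDeg]

theorem inertiaDegOver_eq_of_isGalois [IsGalois ℚ K] (hp : p.Prime) {Q : Ideal (𝓞 K)}
    (hP : P ∈ PrimesOver K p) (hQ : Q ∈ PrimesOver K p) :
    inertiaDegOver K p P = inertiaDegOver K p Q := by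
  obtain ⟨_, _⟩ := (mem_primesOver_iff hp).mp hP
  obtain ⟨_, _⟩ := (mem_primesOver_iff hp).mp hQ
  rw [inertiaDegOver_eq_inertiaDeg hp hP, inertiaDegOver_eq_inertiaDeg hp hQ,
    Ideal.inertiaDeg_eq_of_isGaloisGroup (Ideal.span {(p : ℤ)}) P Q (K ≃ₐ[ℚ] K)]

variable {F : Type} [Field F] [NumberField F] [Algebra F K]

theorem under_mem_primesOver (hp : p.Prime) (hP : P ∈ PrimesOver K p) :
    P.under (𝓞 F) ∈ PrimesOver F p := by
  obtain ⟨_, _⟩ := (mem_primesOver_iff hp).mp hP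
  have : (P.under (𝓞 F)).LiesOver (Ideal.span {(p : ℤ)}) := .tower_bot P _ _
  exact (mem_primesOver_iff hp).mpr ⟨inferInstance, inferInstance⟩

theorem exists_mem_primesOver_under_eq (hp : p.Prime) {Q : Ideal (𝓞 F)}
    (hQ : Q ∈ PrimesOver F p) : ∃ P ∈ PrimesOver K p, P.under (𝓞 F) = Q := by
  obtain ⟨_, _⟩ := (mem_primesOver_iff hp).mp hQ
  obtain ⟨⟨P, _, _⟩⟩ := (inferInstance : Nonempty (Q.primesOver (𝓞 K)))
  have : P.LiesOver (Ideal.span {(p : ℤ)}) := .trans P Q _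
  exact ⟨P, (mem_primesOver_iff hp).mpr ⟨inferInstance, inferInstance⟩, (Ideal.over_def P Q).symm⟩

theorem inertiaDegOver_under_dvd (hp : p.Prime) (hP : P ∈ PrimesOver K p) :
    inertiaDegOver F p (P.under (𝓞 F)) ∣ inertiaDegOver K p P := by
  rw [inertiaDegOver_eq_inertiaDeg hp hP,
    inertiaDegOver_eq_inertiaDeg hp (under_mem_primesOver hp hP),
    Ideal.inertiaDeg_tower (P.under (𝓞 F)) P]
  exact dvd_mul_right _ _

theorem ramIdxOver_under_dvd (hp : p.Prime) (hP : P ∈ PrimesOver K p) :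
    ramIdxOver F p (P.under (𝓞 F)) ∣ ramIdxOver K p P := by
  rw [ramIdxOver_eq_ramificationIdx hp hP,
    ramIdxOver_eq_ramificationIdx hp (under_mem_primesOver hp hP),
    Ideal.ramificationIdx_tower (P.under (𝓞 F)) P]
  exact dvd_mul_right _ _

theorem UnramifiedIn.of_algebra (hp : p.Prime) (h : UnramifiedIn K p) : UnramifiedIn F p := by
  intro Q hQ
  obtain ⟨P, hP, rfl⟩ := exists_mem_primesOver_under_eq (K := K) hp hQ
  exact Nat.dvd_one.mp (h P hP ▸ ramIdxOver_under_dvd hp hP)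

end PrimesOver

theorem UnramifiedIn.of_not_dvd_discr {K : Type} [Field K] [NumberField K] {p : ℕ}
    (hp : p.Prime) (h : ¬ (p : ℤ) ∣ NumberField.discr K) : UnramifiedIn K p := by
  intro P hP
  have : P.IsPrime := hP.1
  have : Algebra.IsUnramifiedAt ℤ P := (NumberField.not_dvd_discr_iff_forall_mem K (𝓞 K) (Nat.prime_iff_prime_int.mp hp)).mp
    h P hP.1 (by simpa using hP.2.2)
  rw [ramIdxOver_eq_ramificationIdx hp hP, Ideal.ramificationIdx_eq_one_of_isUnramifiedAt]

theorem finite_setOf_not_unramifiedIn (K : Type) [Field K] [NumberField K] :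
    {p : ℕ | p.Prime ∧ ¬ UnramifiedIn K p}.Finite := by
  refine (Nat.divisors (NumberField.discr K).natAbs).finite_toSet.subset ?_
  rintro p ⟨hp, hram⟩
  have hdvd : (p : ℤ) ∣ NumberField.discr K :=
    not_not.mp (mt (UnramifiedIn.of_not_dvd_discr hp) hram)
  simpa [Nat.mem_divisors, NumberField.discr_ne_zero] using Int.natCast_dvd.mp hdvd

theorem SplitsCompletely.of_isGalois_of_inertiaDegOver {F K : Type} [Field F] [Field K]
    [NumberField F] [NumberField K] [Algebra F K] [IsGalois ℚ F] {p : ℕ} (hp : p.Prime)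
    (hunr : UnramifiedIn K p)
    (hcoprime : ∀ d, (∀ P ∈ PrimesOver K p, d ∣ inertiaDegOver K p P) → d = 1) :
    SplitsCompletely F p := by
  intro Q hQ
  refine ⟨UnramifiedIn.of_algebra hp hunr Q hQ, hcoprime _ fun P hP => ?_⟩
  rw [inertiaDegOver_eq_of_isGalois hp hQ (under_mem_primesOver hp hP)]
  exact inertiaDegOver_under_dvd hp hP

theorem eventually_splitsCompletely_of_inertiaDegOver {k K F : Type} [Field k] [Field K]
    [Field F] [NumberField k] [NumberField K] [NumberField F] [Algebra F K] [IsGalois ℚ F]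
    (hdvd : ∀ p : ℕ, p.Prime → UnramifiedIn k p → UnramifiedIn K p → ∀ d : ℕ,
      (∀ P ∈ PrimesOver K p, d ∣ inertiaDegOver K p P) →
        ∀ P ∈ PrimesOver k p, d ∣ inertiaDegOver k p P) :
    ∃ S : Set ℕ, S.Finite ∧ ∀ p : ℕ, p.Prime → p ∉ S →
      (∃ P ∈ PrimesOver k p, inertiaDegOver k p P = 1) → SplitsCompletely F p := by
  refine ⟨_, (finite_setOf_not_unramifiedIn k).union (finite_setOf_not_unramifiedIn K), ?_⟩
  rintro p hp hpS ⟨P, hP, hf⟩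
  have hunr : UnramifiedIn k p := by_contra fun h => hpS (.inl ⟨hp, h⟩)
  have hunr' : UnramifiedIn K p := by_contra fun h => hpS (.inr ⟨hp, h⟩)
  refine SplitsCompletely.of_isGalois_of_inertiaDegOver hp hunr' fun d hd => ?_
  exact Nat.dvd_one.mp (hf ▸ hdvd p hp hunr hunr' d hd P hP)

section GaloisKernel

variable (k : Type) [Field k] [NumberField k]

instance isGalois_galoisKernel : IsGalois ℚ (galoisKernel k) := by
  have : Normal ℚ (galoisKernel k) := by
    rw [galoisKernel, ← iSup_subtype'' {E : IntermediateField ℚ k | IsGalois ℚ E} (fun E => E)]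
    have (E : {E : IntermediateField ℚ k | IsGalois ℚ E}) : Normal ℚ (E : IntermediateField ℚ k) :=
      E.2.to_normal
    exact IntermediateField.normal_iSup ℚ k _ (h := this)
  constructor

variable {k}

theorem le_galoisKernel {E : IntermediateField ℚ k} (hE : IsGalois ℚ E) : E ≤ galoisKernel k :=
  le_iSup₂ (f := fun (E : IntermediateField ℚ k) (_ : IsGalois ℚ E) => E) E hE

def galoisKernel.lift {E : Type} [Field E] [CharZero E] [IsGalois ℚ E] (φ : E →+* k) :
    E →ₐ[ℚ] galoisKernel k :=
  let j := RingHom.equivRatAlgHom _ _ φ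
  let e : E ≃ₐ[ℚ] j.fieldRange := AlgEquiv.ofInjectiveField j
  have := IsGalois.of_algEquiv e
  (IntermediateField.inclusion (le_galoisKernel this)).comp e.toAlgHom

end GaloisKernel

theorem brauerEquivalent_galoisKernel_iso_general
    (k k' : Type) [Field k] [Field k'] [NumberField k] [NumberField k']
    (hgcd : ∀ p : ℕ, p.Prime → UnramifiedIn k p → UnramifiedIn k' p →
      ∀ d : ℕ, (∀ P ∈ PrimesOver k p, d ∣ inertiaDegOver k p P) ↔
               (∀ P ∈ PrimesOver k' p, d ∣ inertiaDegOver k' p P))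
    (hbrauerthm : ∀ (K N : Type) [Field K] [Field N] [NumberField K] [NumberField N]
      [IsGalois ℚ N],
      (∃ S : Set ℕ, S.Finite ∧ ∀ p : ℕ, p.Prime → p ∉ S →
        (∃ P ∈ PrimesOver K p, inertiaDegOver K p P = 1) → SplitsCompletely N p) →
      Nonempty (N →+* K)) :
    Nonempty ((galoisKernel k) ≃ₐ[ℚ] (galoisKernel k')) := by
  obtain ⟨ι⟩ := hbrauerthm k (galoisKernel k') <|
    eventually_splitsCompletely_of_inertiaDegOver fun p hp h h' d => (hgcd p hp h h' d).mpr
  obtain ⟨ι'⟩ := hbrauerthm k' (galoisKernel k) <|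
    eventually_splitsCompletely_of_inertiaDegOver fun p hp h' h d => (hgcd p hp h h' d).mp
  exact ⟨.ofBijective _
    (Algebra.IsAlgebraic.algHom_bijective₂ (galoisKernel.lift ι') (galoisKernel.lift ι)).1⟩

/-- Brauer equivalent number fields have isomorphic Galois kernels.
The hypotheses record the facts that may be assumed: the Linowitz–McReynolds–
Miller gcd theorem on inertia degrees (stated as equality of the sets of common
divisors), the Chebotarev-type fact that containment (up to finitely many
exceptions) of split primes of Galois extensions of `ℚ` implies containment of
fields, and Brauer's theorem. -/
theorem brauerEquivalent_galoisKernel_iso (T : BrauerTheory)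
    (k k' : Type) [Field k] [Field k'] [NumberField k] [NumberField k']
    (h : BrauerEquivalent T k k')
    (hgcd : ∀ p : ℕ, p.Prime → UnramifiedIn k p → UnramifiedIn k' p →
      ∀ d : ℕ, (∀ P ∈ PrimesOver k p, d ∣ inertiaDegOver k p P) ↔
               (∀ P ∈ PrimesOver k' p, d ∣ inertiaDegOver k' p P))
    (hcheb : ∀ (M N : Type) [Field M] [Field N] [NumberField M] [NumberField N]
      [IsGalois ℚ M] [IsGalois ℚ N],
      (∃ S : Set ℕ, S.Finite ∧ ∀ p : ℕ, p.Prime → p ∉ S →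
        SplitsCompletely M p → SplitsCompletely N p) →
      Nonempty (N →+* M))
    (hbrauerthm : ∀ (K N : Type) [Field K] [Field N] [NumberField K] [NumberField N]
      [IsGalois ℚ N],
      (∃ S : Set ℕ, S.Finite ∧ ∀ p : ℕ, p.Prime → p ∉ S →
        (∃ P ∈ PrimesOver K p, inertiaDegOver K p P = 1) → SplitsCompletely N p) →
      Nonempty (N →+* K)) :
    Nonempty ((galoisKernel k) ≃ₐ[ℚ] (galoisKernel k')) :=
  brauerEquivalent_galoisKernel_iso_general k k' hgcd hbrauerthm

end
end

section
/- Let K be a number field with at least one real place unramified in a quaternion algebra A over K, and suppose p₃, p₄ are finite primes of K, not ramified in A, that do not split completely in the class field K(A)/K. If A' is the quaternion algebra over K with Ram(A') = Ram(A) ∪ {p₃, p₄}, then K(A') is a proper subfield of K(A) containing K. Consequently, iterating this construction finitely many times produces a quaternion algebra A* over K with K(A*) = K, i.e., all maximal orders of A* are conjugate. -/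
/- The class field `K(A)` is the largest extension satisfying local conditions that only become
stronger when the ramification of `A` grows, so enlarging `Ram(A)` can only shrink `K(A)`; it
shrinks strictly once a new ramified prime does not split completely in `K(A)`, since it must
split completely in the new class field. As `[K(A) : K]` is finite, after finitely many such
enlargements (which Chebotarev makes possible while `K(A) ≠ K`) the class field is trivial, and
then the type number is one. -/

/- Preliminary definitions: an abstract Brauer-group theory (the Brauer group
functor together with restriction maps and the class map on algebras), Brauer
equivalence of number fields, quaternion algebras, ramification at finite and
infinite places, splitting of rational primes, orders, etc. -/

open NumberField Module IsDedekindDomain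
open scoped TensorProduct

noncomputable section

/-- The defining properties of the class field `K(A)` attached to an indefinite
quaternion algebra `A` over `K` (realized as an intermediate field of `ℂ/K`):
a finite abelian extension with `2`-elementary Galois group, unramified at all
finite places, unramified at every infinite place except possibly the real
places of `K` ramified in `A`, and in which every finite prime of `K` ramified
in `A` splits completely. -/
def IsPreClassField (K : Type) [Field K] [NumberField K] [Algebra K ℂ]
    (A : Type) [Ring A] [Algebra K A] (E : IntermediateField K ℂ) : Prop :=
  FiniteDimensional K ↥E ∧ IsGalois K ↥E ∧ (∀ g : ↥E ≃ₐ[K] ↥E, g * g = 1) ∧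
  (∀ v : Ideal (𝓞 K), v.IsPrime → v ≠ ⊥ → UnramifiedAtRel K ↥E v) ∧
  (∀ w : NumberField.InfinitePlace ↥E,
    ((w.comap (algebraMap K ↥E)).IsReal ∧
      ¬ RamifiedAtInf K A (w.comap (algebraMap K ↥E))) → w.IsReal) ∧
  (∀ v : IsDedekindDomain.HeightOneSpectrum (𝓞 K),
    RamifiedAtFin K A v → SplitsCompletelyAt K ↥E v.asIdeal)

/-- `E` is *the* class field `K(A)`: it satisfies the defining properties and is
maximal among all intermediate fields satisfying them. -/
def IsClassField (K : Type) [Field K] [NumberField K] [Algebra K ℂ]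
    (A : Type) [Ring A] [Algebra K A] (E : IntermediateField K ℂ) : Prop :=
  IsPreClassField K A E ∧
  ∀ E' : IntermediateField K ℂ, IsPreClassField K A E' → E' ≤ E

/-- A quaternion algebra over `K` with the same infinite ramification as `A`,
with finite ramification containing that of `A`, whose class field is trivial,
and all of whose maximal orders are conjugate. -/
structure TrivialClassFieldQuat (K : Type) [Field K] [NumberField K] [Algebra K ℂ]
    (A : Type) [Ring A] [Algebra K A] : Type 1 where
  carrier : Type
  [ringC : Ring carrier]
  [algC : Algebra K carrier]
  quat : IsQuaternionAlgebra K carrier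
  raminf : ∀ v : NumberField.InfinitePlace K,
    RamifiedAtInf K carrier v ↔ RamifiedAtInf K A v
  ramfin : ∀ v : IsDedekindDomain.HeightOneSpectrum (𝓞 K),
    RamifiedAtFin K A v → RamifiedAtFin K carrier v
  classfield : ∀ E₀ : IntermediateField K ℂ, IsClassField K carrier E₀ → E₀ = ⊥
  conj : ∀ O O' : Subring carrier,
    IsMaximalOrder K carrier O → IsMaximalOrder K carrier O' →
    ∃ u : carrierˣ, ∀ x : carrier,
      x ∈ O' ↔ (u : carrier) * x * ((u⁻¹ : carrierˣ) : carrier) ∈ O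

/-- A quaternion algebra over `K` whose ramification set is that of `A₀`
enlarged by two given finite primes. -/
structure QuatExtension (K : Type) [Field K] [NumberField K]
    (A₀ : Type) [Ring A₀] [Algebra K A₀]
    (q r : IsDedekindDomain.HeightOneSpectrum (𝓞 K)) : Type 1 where
  carrier : Type
  [ringC : Ring carrier]
  [algC : Algebra K carrier]
  quat : IsQuaternionAlgebra K carrier
  ramfin : ∀ v : IsDedekindDomain.HeightOneSpectrum (𝓞 K),
    RamifiedAtFin K carrier v ↔ (RamifiedAtFin K A₀ v ∨ v = q ∨ v = r)
  raminf : ∀ v : NumberField.InfinitePlace K,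
    RamifiedAtInf K carrier v ↔ RamifiedAtInf K A₀ v

attribute [instance] QuatExtension.ringC QuatExtension.algC

section ClassField

variable {K : Type} [Field K] [NumberField K] [Algebra K ℂ]
  {A A' : Type} [Ring A] [Algebra K A] [Ring A'] [Algebra K A']
  {E E' : IntermediateField K ℂ}

theorem IsPreClassField.of_ramified_mono
    (hinf : ∀ v, RamifiedAtInf K A' v → RamifiedAtInf K A v)
    (hfin : ∀ v, RamifiedAtFin K A v → RamifiedAtFin K A' v)
    (hE' : IsPreClassField K A' E') : IsPreClassField K A E' := by
  obtain ⟨hfd, hgal, helem, hunram, hreal, hsplit⟩ := hE'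
  refine ⟨hfd, hgal, helem, hunram, ?_, fun v hv ↦ hsplit v (hfin v hv)⟩
  rintro w ⟨hw, hnram⟩
  exact hreal w ⟨hw, mt (hinf _) hnram⟩

theorem IsClassField.le_of_ramified_mono (hE : IsClassField K A E)
    (hinf : ∀ v, RamifiedAtInf K A' v → RamifiedAtInf K A v)
    (hfin : ∀ v, RamifiedAtFin K A v → RamifiedAtFin K A' v)
    (hE' : IsClassField K A' E') : E' ≤ E :=
  hE.2 E' (hE'.1.of_ramified_mono hinf hfin)

theorem IsClassField.unique (hE : IsClassField K A E) (hE' : IsClassField K A E') : E' = E :=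
  le_antisymm (hE.2 E' hE'.1) (hE'.2 E hE.1)

theorem IsClassField.splitsCompletelyAt (hE : IsClassField K A E)
    {v : HeightOneSpectrum (𝓞 K)} (hv : RamifiedAtFin K A v) :
    SplitsCompletelyAt K E v.asIdeal :=
  hE.1.2.2.2.2.2 v hv

theorem IsClassField.lt_of_ramified_mono (hE : IsClassField K A E)
    (hinf : ∀ v, RamifiedAtInf K A' v → RamifiedAtInf K A v)
    (hfin : ∀ v, RamifiedAtFin K A v → RamifiedAtFin K A' v)
    {p : HeightOneSpectrum (𝓞 K)} (hp : RamifiedAtFin K A' p)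
    (hsplit : ¬ SplitsCompletelyAt K E p.asIdeal)
    (hE' : IsClassField K A' E') : E' < E := by
  refine (hE.le_of_ramified_mono hinf hfin hE').lt_of_ne ?_
  rintro rfl
  exact hsplit (hE'.splitsCompletelyAt hp)

theorem IsClassField.finrank_lt_of_lt (hE : IsClassField K A E) (hlt : E' < E) :
    finrank K E' < finrank K E := by
  have : FiniteDimensional K E := hE.1.1
  refine lt_of_not_ge fun hle ↦ hlt.ne ?_
  exact IntermediateField.eq_of_le_of_finrank_le hlt.le hle

theorem IsClassField.lt_of_quatExtension (hE : IsClassField K A E)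
    {q r : HeightOneSpectrum (𝓞 K)} (hq : ¬ SplitsCompletelyAt K E q.asIdeal)
    (B : QuatExtension K A q r) (hE' : IsClassField K B.carrier E') : E' < E :=
  hE.lt_of_ramified_mono (fun v ↦ (B.raminf v).1) (fun v hv ↦ (B.ramfin v).2 (.inl hv))
    ((B.ramfin q).2 (.inr (.inl rfl))) hq hE'

end ClassField

theorem exists_trivialClassFieldQuat_of_ramified_mono
    {K : Type} [Field K] [NumberField K] [Algebra K ℂ] {A : Type} [Ring A] [Algebra K A]
    (htype : ∀ (A₀ : Type) [Ring A₀] [Algebra K A₀] (E₀ : IntermediateField K ℂ),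
      IsQuaternionAlgebra K A₀ → IsClassField K A₀ E₀ → E₀ = ⊥ →
      ∀ O O' : Subring A₀, IsMaximalOrder K A₀ O → IsMaximalOrder K A₀ O' →
        ∃ u : A₀ˣ, ∀ x : A₀, x ∈ O' ↔ (u : A₀) * x * ((u⁻¹ : A₀ˣ) : A₀) ∈ O)
    (hCFexists : ∀ (A₀ : Type) [Ring A₀] [Algebra K A₀], IsQuaternionAlgebra K A₀ →
      ∃ E₀ : IntermediateField K ℂ, IsClassField K A₀ E₀)
    (hext : ∀ (A₀ : Type) [Ring A₀] [Algebra K A₀]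
      (q r : IsDedekindDomain.HeightOneSpectrum (𝓞 K)),
      IsQuaternionAlgebra K A₀ → q ≠ r →
      ¬ RamifiedAtFin K A₀ q → ¬ RamifiedAtFin K A₀ r →
      Nonempty (QuatExtension K A₀ q r))
    (hprimes : ∀ (A₀ : Type) [Ring A₀] [Algebra K A₀] (E₀ : IntermediateField K ℂ),
      IsQuaternionAlgebra K A₀ → IsClassField K A₀ E₀ → E₀ ≠ ⊥ →
      ∃ q r : IsDedekindDomain.HeightOneSpectrum (𝓞 K), q ≠ r ∧
        ¬ RamifiedAtFin K A₀ q ∧ ¬ RamifiedAtFin K A₀ r ∧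
        ¬ SplitsCompletelyAt K ↥E₀ q.asIdeal ∧ ¬ SplitsCompletelyAt K ↥E₀ r.asIdeal)
    (A₀ : Type) [Ring A₀] [Algebra K A₀] (E₀ : IntermediateField K ℂ)
    (hA₀ : IsQuaternionAlgebra K A₀) (hE₀ : IsClassField K A₀ E₀)
    (hinf : ∀ v, RamifiedAtInf K A₀ v ↔ RamifiedAtInf K A v)
    (hfin : ∀ v, RamifiedAtFin K A v → RamifiedAtFin K A₀ v) :
    Nonempty (TrivialClassFieldQuat K A) := by
  induction hn : finrank K E₀ using Nat.strong_induction_on generalizing A₀ E₀ with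
  | _ n ih =>
    by_cases hbot : E₀ = ⊥
    · exact ⟨⟨A₀, hA₀, hinf, hfin, fun E₁ hE₁ ↦ (hE₀.unique hE₁).trans hbot,
        htype A₀ E₀ hA₀ hE₀ hbot⟩⟩
    obtain ⟨q, r, hqr, hq, hr, hsq, -⟩ := hprimes A₀ E₀ hA₀ hE₀ hbot
    obtain ⟨B⟩ := hext A₀ q r hA₀ hqr hq hr
    obtain ⟨E₁, hE₁⟩ := hCFexists B.carrier B.quat
    have hlt : E₁ < E₀ := hE₀.lt_of_quatExtension hsq B hE₁
    exact ih _ (hn ▸ hE₀.finrank_lt_of_lt hlt) B.carrier E₁ B.quat hE₁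
      (fun v ↦ (B.raminf v).trans (hinf v)) (fun v hv ↦ (B.ramfin v).2 (.inl (hfin v hv))) rfl

theorem classField_shrinks_and_trivializes_general
    (K : Type) [Field K] [NumberField K] [Algebra K ℂ]
    (A : Type) [Ring A] [Algebra K A] (hA : IsQuaternionAlgebra K A)
    (E : IntermediateField K ℂ) (hE : IsClassField K A E)
    (p₃ p₄ : IsDedekindDomain.HeightOneSpectrum (𝓞 K))
    (hs₃ : ¬ SplitsCompletelyAt K ↥E p₃.asIdeal)
    (A' : Type) [Ring A'] [Algebra K A']
    (hRamFin' : ∀ v : IsDedekindDomain.HeightOneSpectrum (𝓞 K),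
      RamifiedAtFin K A' v ↔ (RamifiedAtFin K A v ∨ v = p₃ ∨ v = p₄))
    (hRamInf' : ∀ v : NumberField.InfinitePlace K,
      RamifiedAtInf K A' v ↔ RamifiedAtInf K A v)
    (E' : IntermediateField K ℂ) (hE' : IsClassField K A' E')
    (htype : ∀ (A₀ : Type) [Ring A₀] [Algebra K A₀] (E₀ : IntermediateField K ℂ),
      IsQuaternionAlgebra K A₀ → IsClassField K A₀ E₀ → E₀ = ⊥ →
      ∀ O O' : Subring A₀, IsMaximalOrder K A₀ O → IsMaximalOrder K A₀ O' →
        ∃ u : A₀ˣ, ∀ x : A₀, x ∈ O' ↔ (u : A₀) * x * ((u⁻¹ : A₀ˣ) : A₀) ∈ O)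
    (hCFexists : ∀ (A₀ : Type) [Ring A₀] [Algebra K A₀], IsQuaternionAlgebra K A₀ →
      ∃ E₀ : IntermediateField K ℂ, IsClassField K A₀ E₀)
    (hext : ∀ (A₀ : Type) [Ring A₀] [Algebra K A₀]
      (q r : IsDedekindDomain.HeightOneSpectrum (𝓞 K)),
      IsQuaternionAlgebra K A₀ → q ≠ r →
      ¬ RamifiedAtFin K A₀ q → ¬ RamifiedAtFin K A₀ r →
      Nonempty (QuatExtension K A₀ q r))
    (hprimes : ∀ (A₀ : Type) [Ring A₀] [Algebra K A₀] (E₀ : IntermediateField K ℂ),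
      IsQuaternionAlgebra K A₀ → IsClassField K A₀ E₀ → E₀ ≠ ⊥ →
      ∃ q r : IsDedekindDomain.HeightOneSpectrum (𝓞 K), q ≠ r ∧
        ¬ RamifiedAtFin K A₀ q ∧ ¬ RamifiedAtFin K A₀ r ∧
        ¬ SplitsCompletelyAt K ↥E₀ q.asIdeal ∧ ¬ SplitsCompletelyAt K ↥E₀ r.asIdeal) :
    E' < E ∧ Nonempty (TrivialClassFieldQuat K A) :=
  ⟨hE.lt_of_ramified_mono (fun v ↦ (hRamInf' v).1) (fun v hv ↦ (hRamFin' v).2 (.inl hv))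
      ((hRamFin' p₃).2 (.inr (.inl rfl))) hs₃ hE',
    exists_trivialClassFieldQuat_of_ramified_mono htype hCFexists hext hprimes A E hA hE
      (fun _ ↦ .rfl) fun _ hv ↦ hv⟩

/-- Let `A` be a quaternion algebra over `K` unramified at some
real place, and let `p₃, p₄` be finite primes of `K`, unramified in `A`, which
do not split completely in the class field `K(A)`.  If `A'` is the quaternion
algebra with `Ram(A') = Ram(A) ∪ {p₃, p₄}`, then `K(A')` is a proper subfield
of `K(A)` containing `K`; consequently, iterating this construction finitely
many times produces a quaternion algebra `A*` over `K` with `K(A*) = K`, i.e.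
all of whose maximal orders are conjugate.  The hypotheses record the facts
that may be used: the type number of a quaternion algebra with trivial class
field is one, class fields exist, quaternion algebras with prescribed enlarged
ramification exist, and (by Chebotarev) suitable primes exist whenever the
class field is nontrivial. -/
theorem classField_shrinks_and_trivializes
    (K : Type) [Field K] [NumberField K] [Algebra K ℂ]
    (A : Type) [Ring A] [Algebra K A] (hA : IsQuaternionAlgebra K A)
    (hindef : ∃ v : NumberField.InfinitePlace K, v.IsReal ∧ ¬ RamifiedAtInf K A v)
    (E : IntermediateField K ℂ) (hE : IsClassField K A E)
    (p₃ p₄ : IsDedekindDomain.HeightOneSpectrum (𝓞 K)) (hne : p₃ ≠ p₄)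
    (h₃ : ¬ RamifiedAtFin K A p₃) (h₄ : ¬ RamifiedAtFin K A p₄)
    (hs₃ : ¬ SplitsCompletelyAt K ↥E p₃.asIdeal)
    (hs₄ : ¬ SplitsCompletelyAt K ↥E p₄.asIdeal)
    (A' : Type) [Ring A'] [Algebra K A'] (hA' : IsQuaternionAlgebra K A')
    (hRamFin' : ∀ v : IsDedekindDomain.HeightOneSpectrum (𝓞 K),
      RamifiedAtFin K A' v ↔ (RamifiedAtFin K A v ∨ v = p₃ ∨ v = p₄))
    (hRamInf' : ∀ v : NumberField.InfinitePlace K,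
      RamifiedAtInf K A' v ↔ RamifiedAtInf K A v)
    (E' : IntermediateField K ℂ) (hE' : IsClassField K A' E')
    (htype : ∀ (A₀ : Type) [Ring A₀] [Algebra K A₀] (E₀ : IntermediateField K ℂ),
      IsQuaternionAlgebra K A₀ → IsClassField K A₀ E₀ → E₀ = ⊥ →
      ∀ O O' : Subring A₀, IsMaximalOrder K A₀ O → IsMaximalOrder K A₀ O' →
        ∃ u : A₀ˣ, ∀ x : A₀, x ∈ O' ↔ (u : A₀) * x * ((u⁻¹ : A₀ˣ) : A₀) ∈ O)
    (hCFexists : ∀ (A₀ : Type) [Ring A₀] [Algebra K A₀], IsQuaternionAlgebra K A₀ →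
      ∃ E₀ : IntermediateField K ℂ, IsClassField K A₀ E₀)
    (hext : ∀ (A₀ : Type) [Ring A₀] [Algebra K A₀]
      (q r : IsDedekindDomain.HeightOneSpectrum (𝓞 K)),
      IsQuaternionAlgebra K A₀ → q ≠ r →
      ¬ RamifiedAtFin K A₀ q → ¬ RamifiedAtFin K A₀ r →
      Nonempty (QuatExtension K A₀ q r))
    (hprimes : ∀ (A₀ : Type) [Ring A₀] [Algebra K A₀] (E₀ : IntermediateField K ℂ),
      IsQuaternionAlgebra K A₀ → IsClassField K A₀ E₀ → E₀ ≠ ⊥ →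
      ∃ q r : IsDedekindDomain.HeightOneSpectrum (𝓞 K), q ≠ r ∧
        ¬ RamifiedAtFin K A₀ q ∧ ¬ RamifiedAtFin K A₀ r ∧
        ¬ SplitsCompletelyAt K ↥E₀ q.asIdeal ∧ ¬ SplitsCompletelyAt K ↥E₀ r.asIdeal) :
    E' < E ∧ Nonempty (TrivialClassFieldQuat K A) :=
  classField_shrinks_and_trivializes_general K A hA E hE p₃ p₄ hs₃ A' hRamFin' hRamInf' E' hE' htype
    hCFexists hext hprimes

end
end
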